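/- arXiv:2410.06562 — 6 statements merged into one kernel-verified Lean document; each statement's English description precedes it below -/
import Mathlib

section
/- Let R = R^1 ⊔ … ⊔ R^m be a partition of the integral root system R such that the spans 𝔰_i = span_ℝ(R^i) are pairwise orthogonal, and set R^i_+ = R_+ ∩ R^i and k_i = k|_{R^i}. Let π_𝔠 denote the orthogonal projection onto 𝔠 = (span_ℝ R)^⊥ and π_{𝔰_i} the orthogonal projection onto 𝔰_i. Then for every continuously differentiable f : 𝔞 → ℂ, every ξ ∈ 𝔞 and every regular x ∈ 𝔞: D_ξ(R_+,k)f(x) = ∂_{π_𝔠 ξ} f(x) + ∑_{i=1}^m D_{π_{𝔰_i} ξ}(R^i_+, k_i) f(x). Furthermore, for each i, D_{π_{𝔰_i} ξ}(R_+,k) f(x) = D_{π_{𝔰_i} ξ}(R^i_+, k_i) f(x). -/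
open scoped BigOperators RealInnerProductSpace
open Finset

variable {𝔞 : Type*} [NormedAddCommGroup 𝔞] [InnerProductSpace ℝ 𝔞] [FiniteDimensional ℝ 𝔞]

/-- The reflection `s_α x = x − ⟨α^∨, x⟩ α`. -/
noncomputable def sRefl (α x : 𝔞) : 𝔞 := x - (2 * ⟪α, x⟫ / ⟪α, α⟫) • α

/-- An integral root system. -/
def IsIntegralRootSystem (R : Finset 𝔞) : Prop :=
  (0 : 𝔞) ∉ R ∧
  (∀ α ∈ R, ∀ β ∈ R, ∃ z : ℤ, 2 * ⟪α, β⟫ / ⟪α, α⟫ = (z : ℝ)) ∧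
  (∀ α ∈ R, ∀ β ∈ R, sRefl α β ∈ R)

/-- A positive system of the root system `R`. -/
def IsPositiveSystem (R Rp : Finset 𝔞) : Prop :=
  ∃ v : 𝔞, (∀ α ∈ R, ⟪α, v⟫ ≠ 0) ∧ ∀ α : 𝔞, α ∈ Rp ↔ α ∈ R ∧ 0 < ⟪α, v⟫

/-- `ρ(R_+, k) = (1/2) ∑_{α ∈ R_+} k_α α`. -/
noncomputable def rho (Rp : Finset 𝔞) (k : 𝔞 → ℝ) : 𝔞 := (1/2 : ℝ) • ∑ α ∈ Rp, k α • α

/-- A regular point. -/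
def IsRegularPt (R : Finset 𝔞) (x : 𝔞) : Prop := ∀ α ∈ R, ⟪α, x⟫ ≠ 0

/-- The Cherednik operator `D_ξ(R_+,k)` applied pointwise. -/
noncomputable def cherednik (Rp : Finset 𝔞) (k : 𝔞 → ℝ) (ξ : 𝔞) (f : 𝔞 → ℂ) (x : 𝔞) : ℂ :=
  fderiv ℝ f x ξ - (⟪rho Rp k, ξ⟫ : ℂ) * f x
    + ∑ α ∈ Rp, ((k α * ⟪α, ξ⟫ : ℝ) : ℂ) * (f x - f (sRefl α x))
        / (1 - Complex.exp (-(⟪α, x⟫ : ℝ) : ℂ))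

/-- Orthogonal projection onto the span of a finite set. -/
noncomputable def projSpan (S : Finset 𝔞) (x : 𝔞) : 𝔞 :=
  (Submodule.orthogonalProjectionOnto (Submodule.span ℝ (S : Set 𝔞)) x : 𝔞)

/-- Orthogonal projection onto the orthogonal complement of the span of a finite set. -/
noncomputable def projPerp (S : Finset 𝔞) (x : 𝔞) : 𝔞 :=
  (Submodule.orthogonalProjectionOnto (Submodule.span ℝ (S : Set 𝔞))ᗮ x : 𝔞)

set_option linter.unusedSectionVars false

lemma inner_projSpan_eq {S : Finset 𝔞} {α : 𝔞} (hα : α ∈ S) (ξ : 𝔞) :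
    ⟪α, projSpan S ξ⟫ = ⟪α, ξ⟫ := by
  have h := Submodule.sub_starProjection_mem_orthogonal
    (K := Submodule.span ℝ (S : Set 𝔞)) ξ
  have hm : α ∈ Submodule.span ℝ (S : Set 𝔞) := Submodule.subset_span hα
  have h0 : ⟪α, ξ - projSpan S ξ⟫ = 0 :=
    (Submodule.mem_orthogonal _ _).mp h α hm
  rw [inner_sub_right] at h0
  linarith

lemma inner_projSpan_zero {S : Finset 𝔞} {α : 𝔞} (h : ∀ β ∈ S, ⟪α, β⟫ = 0) (ξ : 𝔞) :
    ⟪α, projSpan S ξ⟫ = 0 := by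
  have hortho : Submodule.span ℝ ({α} : Set 𝔞) ⟂ Submodule.span ℝ (S : Set 𝔞) :=
    Submodule.isOrtho_span.mpr (by intro u hu v hv; rcases hu with rfl; exact h v hv)
  have hm : (projSpan S ξ) ∈ Submodule.span ℝ (S : Set 𝔞) :=
    (Submodule.orthogonalProjectionOnto _ ξ).2
  exact hortho.inner_eq (Submodule.mem_span_singleton_self α) hm

lemma inner_projPerp_zero {S : Finset 𝔞} {α : 𝔞} (hα : α ∈ S) (ξ : 𝔞) :
    ⟪α, projPerp S ξ⟫ = 0 := by
  have hm : (projPerp S ξ) ∈ (Submodule.span ℝ (S : Set 𝔞))ᗮ :=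
    (Submodule.orthogonalProjectionOnto _ ξ).2
  exact (Submodule.mem_orthogonal _ _).mp hm α (Submodule.subset_span hα)

lemma inner_rho (Rp : Finset 𝔞) (k : 𝔞 → ℝ) (v : 𝔞) :
    ⟪rho Rp k, v⟫ = (1/2 : ℝ) * ∑ α ∈ Rp, k α * ⟪α, v⟫ := by
  simp [rho, real_inner_smul_left, sum_inner]

lemma cherednik_zero (Rp : Finset 𝔞) (k : 𝔞 → ℝ) (f : 𝔞 → ℂ) (x : 𝔞) :
    cherednik Rp k (0 : 𝔞) f x = 0 := by
  simp [cherednik, inner_zero_right]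

lemma cherednik_add (Rp : Finset 𝔞) (k : 𝔞 → ℝ) (u v : 𝔞) (f : 𝔞 → ℂ) (x : 𝔞) :
    cherednik Rp k (u + v) f x = cherednik Rp k u f x + cherednik Rp k v f x := by
  unfold cherednik
  rw [map_add, inner_add_right]
  have hs : ∀ α ∈ Rp,
      ((k α * ⟪α, u + v⟫ : ℝ) : ℂ) * (f x - f (sRefl α x))
          / (1 - Complex.exp (-(⟪α, x⟫ : ℝ) : ℂ))
        = ((k α * ⟪α, u⟫ : ℝ) : ℂ) * (f x - f (sRefl α x))
            / (1 - Complex.exp (-(⟪α, x⟫ : ℝ) : ℂ))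
          + ((k α * ⟪α, v⟫ : ℝ) : ℂ) * (f x - f (sRefl α x))
            / (1 - Complex.exp (-(⟪α, x⟫ : ℝ) : ℂ)) := by
    intro α _
    rw [inner_add_right]
    push_cast
    ring
  rw [Finset.sum_congr rfl hs, Finset.sum_add_distrib]
  push_cast
  ring

lemma cherednik_sum {ι : Type*} (Rp : Finset 𝔞) (k : 𝔞 → ℝ) (s : Finset ι) (v : ι → 𝔞)
    (f : 𝔞 → ℂ) (x : 𝔞) :
    cherednik Rp k (∑ i ∈ s, v i) f x = ∑ i ∈ s, cherednik Rp k (v i) f x := by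
  induction s using Finset.cons_induction with
  | empty => simp [cherednik_zero]
  | cons a s ha ih => rw [Finset.sum_cons, cherednik_add, ih, Finset.sum_cons]

lemma cherednik_restrict [DecidableEq 𝔞] (Rp T : Finset 𝔞) (k : 𝔞 → ℝ) (ξ' : 𝔞)
    (hzero : ∀ α ∈ Rp, α ∉ T → ⟪α, ξ'⟫ = 0) (f : 𝔞 → ℂ) (x : 𝔞) :
    cherednik Rp k ξ' f x = cherednik (Rp ∩ T) k ξ' f x := by
  unfold cherednik
  have hrho : ⟪rho Rp k, ξ'⟫ = ⟪rho (Rp ∩ T) k, ξ'⟫ := by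
    rw [inner_rho, inner_rho]
    congr 1
    rw [eq_comm]
    refine Finset.sum_subset (Finset.inter_subset_left) ?_
    intro α hα hα'
    have : α ∉ T := fun h => hα' (Finset.mem_inter.mpr ⟨hα, h⟩)
    rw [hzero α hα this, mul_zero]
  rw [hrho]
  congr 1
  rw [eq_comm]
  refine Finset.sum_subset (Finset.inter_subset_left) ?_
  intro α hα hα'
  have : α ∉ T := fun h => hα' (Finset.mem_inter.mpr ⟨hα, h⟩)
  rw [hzero α hα this]
  push_cast
  simp

/-- Decomposition of the Cherednik operator along an orthogonal
partition `R = R¹ ⊔ … ⊔ Rᵐ` of the integral root system `R`. -/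
theorem cherednik_decomposition [DecidableEq 𝔞]
    (R : Finset 𝔞) (hR : IsIntegralRootSystem R)
    (Rp : Finset 𝔞) (hRp : IsPositiveSystem R Rp)
    (k : 𝔞 → ℝ) (hk : ∀ α ∈ R, ∀ β ∈ R, k (sRefl α β) = k β)
    (m : ℕ) (Rs : Fin m → Finset 𝔞)
    (hpart : ∀ α : 𝔞, α ∈ R ↔ ∃ i, α ∈ Rs i)
    (hdisj : ∀ i j, i ≠ j → Disjoint (Rs i) (Rs j))
    (horth : ∀ i j, i ≠ j → ∀ α ∈ Rs i, ∀ β ∈ Rs j, ⟪α, β⟫ = 0)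
    (f : 𝔞 → ℂ) (hf : ContDiff ℝ 1 f) (ξ x : 𝔞) (hx : IsRegularPt R x) :
    (cherednik Rp k ξ f x =
      fderiv ℝ f x (projPerp R ξ) + ∑ i, cherednik (Rp ∩ Rs i) k (projSpan (Rs i) ξ) f x)
    ∧ ∀ i, cherednik Rp k (projSpan (Rs i) ξ) f x
        = cherednik (Rp ∩ Rs i) k (projSpan (Rs i) ξ) f x := by
  have hRpR : ∀ α ∈ Rp, α ∈ R := by
    obtain ⟨v, -, hv⟩ := hRp
    exact fun α hα => ((hv α).mp hα).1
  -- key vanishing: α ∈ R, α ∉ Rs i ⟹ ⟪α, projSpan (Rs i) ξ⟫ = 0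
  have hvan : ∀ (i : Fin m), ∀ α ∈ R, α ∉ Rs i → ⟪α, projSpan (Rs i) ξ⟫ = 0 := by
    intro i α hαR hαi
    obtain ⟨j, hj⟩ := (hpart α).mp hαR
    have hji : j ≠ i := fun h => hαi (h ▸ hj)
    exact inner_projSpan_zero (fun β hβ => horth j i hji α hj β hβ) ξ
  -- second statement
  have h2 : ∀ i, cherednik Rp k (projSpan (Rs i) ξ) f x
      = cherednik (Rp ∩ Rs i) k (projSpan (Rs i) ξ) f x := by
    intro i
    exact cherednik_restrict Rp (Rs i) k _ (fun α hα hα' => hvan i α (hRpR α hα) hα') f x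
  refine ⟨?_, h2⟩
  -- decomposition of ξ
  set K := Submodule.span ℝ (R : Set 𝔞) with hK
  have hξdec : ξ = projPerp R ξ + ∑ i, projSpan (Rs i) ξ := by
    set u := ξ - projPerp R ξ - ∑ i, projSpan (Rs i) ξ with hu
    have huK : u ∈ K := by
      have h1 : ξ - projPerp R ξ ∈ K := by
        have : ξ - projPerp R ξ = projSpan R ξ := by
          have h := Submodule.starProjection_add_starProjection_orthogonal (K := K) ξ
          rw [projSpan, projPerp, sub_eq_iff_eq_add]
          exact h.symm
        rw [this]
        exact (Submodule.orthogonalProjectionOnto _ ξ).2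
      have h2' : (∑ i, projSpan (Rs i) ξ) ∈ K := by
        refine Submodule.sum_mem _ (fun i _ => ?_)
        have hsub : Submodule.span ℝ ((Rs i : Set 𝔞)) ≤ K := by
          refine Submodule.span_mono ?_
          intro β hβ
          exact (hpart β).mpr ⟨i, hβ⟩
        exact hsub (Submodule.orthogonalProjectionOnto _ ξ).2
      have : u = (ξ - projPerp R ξ) - ∑ i, projSpan (Rs i) ξ := by rw [hu]
      rw [this]
      exact Submodule.sub_mem _ h1 h2'
    have huKp : u ∈ Kᗮ := by
      have hortho : K ⟂ Submodule.span ℝ ({u} : Set 𝔞) := by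
        refine Submodule.isOrtho_span.mpr ?_
        intro β hβ v hv
        rcases hv with rfl
        obtain ⟨i, hi⟩ := (hpart β).mp hβ
        have hβR : β ∈ R := hβ
        rw [hu, inner_sub_right, inner_sub_right, inner_projPerp_zero hβR, inner_sum]
        rw [Finset.sum_eq_single i (fun j _ hj => hvan j β hβR
          (fun h => (hdisj i j (Ne.symm hj)).forall_ne_finset hi h rfl)) (by simp)]
        rw [inner_projSpan_eq hi]
        ring
      exact hortho.symm (Submodule.mem_span_singleton_self u)
    have hu0 : u = 0 :=
      Submodule.disjoint_def.mp (Submodule.orthogonal_disjoint K) u huK huKp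
    have : ξ - (projPerp R ξ + ∑ i, projSpan (Rs i) ξ) = 0 := by
      rw [← hu0, hu]; abel
    exact (sub_eq_zero.mp this)
  have hperp : ∀ α ∈ Rp, ⟪α, projPerp R ξ⟫ = 0 :=
    fun α hα => inner_projPerp_zero (hRpR α hα) ξ
  have hperpD : cherednik Rp k (projPerp R ξ) f x = fderiv ℝ f x (projPerp R ξ) := by
    unfold cherednik
    rw [inner_rho]
    have e1 : ∑ α ∈ Rp, k α * ⟪α, projPerp R ξ⟫ = 0 :=
      Finset.sum_eq_zero (fun α hα => by rw [hperp α hα, mul_zero])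
    have e2 : ∑ α ∈ Rp, ((k α * ⟪α, projPerp R ξ⟫ : ℝ) : ℂ) * (f x - f (sRefl α x))
        / (1 - Complex.exp (-(⟪α, x⟫ : ℝ) : ℂ)) = 0 :=
      Finset.sum_eq_zero (fun α hα => by rw [hperp α hα]; push_cast; ring)
    rw [e1, e2]
    push_cast
    ring
  calc cherednik Rp k ξ f x
      = cherednik Rp k (projPerp R ξ + ∑ i, projSpan (Rs i) ξ) f x := by rw [← hξdec]
    _ = cherednik Rp k (projPerp R ξ) f x
          + ∑ i, cherednik Rp k (projSpan (Rs i) ξ) f x := by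
        rw [cherednik_add, cherednik_sum]
    _ = fderiv ℝ f x (projPerp R ξ)
          + ∑ i, cherednik (Rp ∩ Rs i) k (projSpan (Rs i) ξ) f x := by
        rw [hperpD, Finset.sum_congr rfl (fun i _ => h2 i)]
end

section
/- Let R = R^1 ⊔ … ⊔ R^m be a partition of the integral root system R such that the spans 𝔰_i = span_ℝ(R^i) are pairwise orthogonal, and set R^i_+ = R_+ ∩ R^i, k_i = k|_{R^i}, and let π_{𝔰_i} be the orthogonal projection onto 𝔰_i. Then for every continuously differentiable f : 𝔞 → ℂ, every ξ ∈ 𝔞, every i, and every regular x ∈ 𝔞: D_ξ(R_+,k)(f ∘ π_{𝔰_i})(x) = (D_{π_{𝔰_i} ξ}(R^i_+, k_i) f)(π_{𝔰_i} x) − ⟨ρ(R_+,k) − ρ(R^i_+,k_i), ξ⟩ f(π_{𝔰_i} x). (Note that each α ∈ R^i satisfies ⟨α, π_{𝔰_i} x⟩ = ⟨α, x⟩ ≠ 0, so the right-hand side is defined.) -/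
open scoped BigOperators RealInnerProductSpace
open Finset

variable {𝔞 : Type*} [NormedAddCommGroup 𝔞] [InnerProductSpace ℝ 𝔞] [FiniteDimensional ℝ 𝔞]

section ProjHelpers

omit [FiniteDimensional ℝ 𝔞] in
lemma projSpan_of_mem (S : Finset 𝔞) {α : 𝔞} (h : α ∈ Submodule.span ℝ (S : Set 𝔞)) :
    projSpan S α = α := Submodule.starProjection_eq_self_iff.2 h

omit [FiniteDimensional ℝ 𝔞] in
lemma inner_projSpan_of_mem (S : Finset 𝔞) {v : 𝔞} (h : v ∈ Submodule.span ℝ (S : Set 𝔞))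
    (y : 𝔞) : ⟪v, projSpan S y⟫ = ⟪v, y⟫ := by
  rw [projSpan, ← Submodule.starProjection_apply, ← Submodule.inner_starProjection_left_eq_right,
    Submodule.starProjection_apply, ← projSpan, projSpan_of_mem S h]

omit [FiniteDimensional ℝ 𝔞] in
lemma projSpan_of_perp (S : Finset 𝔞) {α : 𝔞}
    (h : α ∈ (Submodule.span ℝ (S : Set 𝔞))ᗮ) : projSpan S α = 0 := by
  rw [projSpan, Submodule.orthogonalProjectionOnto_apply_of_mem_orthogonal h,
    Submodule.coe_zero]

omit [FiniteDimensional ℝ 𝔞] in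
lemma projSpan_sRefl_aux (S : Finset 𝔞) (α x : 𝔞) :
    projSpan S (sRefl α x) = projSpan S x - (2 * ⟪α, x⟫ / ⟪α, α⟫) • projSpan S α := by
  simp [projSpan, sRefl]

omit [FiniteDimensional ℝ 𝔞] in
lemma fderiv_comp_projSpan (S : Finset 𝔞) (f : 𝔞 → ℂ)
    (x : 𝔞) (hf : DifferentiableAt ℝ f (projSpan S x)) (ξ : 𝔞) :
    fderiv ℝ (fun y => f (projSpan S y)) x ξ = fderiv ℝ f (projSpan S x) (projSpan S ξ) := by
  set s := Submodule.span ℝ (S : Set 𝔞)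
  set L : 𝔞 →L[ℝ] 𝔞 := s.subtypeL.comp (s.orthogonalProjectionOnto) with hL
  have hproj : ∀ y, projSpan S y = L y := fun y => rfl
  have h1 : (fun y => f (projSpan S y)) = f ∘ L := by
    funext y; simp [hproj]
  rw [h1, fderiv_comp x (by rw [← hproj]; exact hf) L.differentiableAt]
  simp [hproj]

end ProjHelpers

/-- For an orthogonal partition `R = R¹ ⊔ … ⊔ Rᵐ`:
`D_ξ(R_+,k)(f ∘ π_{𝔰_i})(x) = (D_{π_{𝔰_i} ξ}(Rⁱ_+, k_i) f)(π_{𝔰_i} x)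
  − ⟨ρ(R_+,k) − ρ(Rⁱ_+,k_i), ξ⟩ f(π_{𝔰_i} x)`. -/
theorem cherednik_comp_projSpan_component [DecidableEq 𝔞]
    (R : Finset 𝔞) (hR : IsIntegralRootSystem R)
    (Rp : Finset 𝔞) (hRp : IsPositiveSystem R Rp)
    (k : 𝔞 → ℝ) (hk : ∀ α ∈ R, ∀ β ∈ R, k (sRefl α β) = k β)
    (m : ℕ) (Rs : Fin m → Finset 𝔞)
    (hpart : ∀ α : 𝔞, α ∈ R ↔ ∃ i, α ∈ Rs i)
    (hdisj : ∀ i j, i ≠ j → Disjoint (Rs i) (Rs j))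
    (horth : ∀ i j, i ≠ j → ∀ α ∈ Rs i, ∀ β ∈ Rs j, ⟪α, β⟫ = 0)
    (f : 𝔞 → ℂ) (hf : ContDiff ℝ 1 f) (ξ x : 𝔞) (i : Fin m) (hx : IsRegularPt R x) :
    cherednik Rp k ξ (fun y => f (projSpan (Rs i) y)) x
      = cherednik (Rp ∩ Rs i) k (projSpan (Rs i) ξ) f (projSpan (Rs i) x)
        - (⟪rho Rp k - rho (Rp ∩ Rs i) k, ξ⟫ : ℂ) * f (projSpan (Rs i) x) := by
  classical
  set s := Submodule.span ℝ ((Rs i : Set 𝔞)) with hs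
  -- membership facts
  have hmem : ∀ α ∈ Rs i, α ∈ s := fun α hα => Submodule.subset_span hα
  have hperp : ∀ α ∈ R, α ∉ Rs i → α ∈ sᗮ := by
    intro α hαR hαni
    obtain ⟨j, hj⟩ := (hpart α).1 hαR
    have hji : j ≠ i := by rintro rfl; exact hαni hj
    rw [Submodule.mem_orthogonal]
    intro u hu
    induction hu using Submodule.span_induction with
    | mem β hβ => exact horth i j hji.symm β hβ α hj
    | zero => exact inner_zero_left α
    | add u v _ _ hu hv => rw [inner_add_left, hu, hv, add_zero]
    | smul c u _ hu => rw [real_inner_smul_left, hu, mul_zero]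
  obtain ⟨v, hv0, hviff⟩ := hRp
  have hRpR : ∀ α ∈ Rp, α ∈ R := fun α hα => ((hviff α).1 hα).1
  -- the differentiability of f
  have hdf : DifferentiableAt ℝ f (projSpan (Rs i) x) := (hf.differentiable one_ne_zero).differentiableAt
  -- derivative piece
  have h1 : fderiv ℝ (fun y => f (projSpan (Rs i) y)) x ξ = fderiv ℝ f (projSpan (Rs i) x) (projSpan (Rs i) ξ) :=
    fderiv_comp_projSpan (Rs i) f x hdf ξ
  -- rho piece
  have hrho : rho (Rp ∩ Rs i) k ∈ s := by
    refine Submodule.smul_mem _ _ (Submodule.sum_mem _ ?_)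
    intro α hα
    exact Submodule.smul_mem _ _ (hmem α (Finset.mem_of_mem_inter_right hα))
  have h3 : ⟪rho (Rp ∩ Rs i) k, projSpan (Rs i) ξ⟫ = ⟪rho (Rp ∩ Rs i) k, ξ⟫ :=
    inner_projSpan_of_mem (Rs i) hrho ξ
  have h4 : ⟪rho Rp k - rho (Rp ∩ Rs i) k, ξ⟫
      = ⟪rho Rp k, ξ⟫ - ⟪rho (Rp ∩ Rs i) k, ξ⟫ := inner_sub_left _ _ _
  -- sum piece
  have h2 : ∑ α ∈ Rp, ((k α * ⟪α, ξ⟫ : ℝ) : ℂ)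
        * ((fun y => f (projSpan (Rs i) y)) x - (fun y => f (projSpan (Rs i) y)) (sRefl α x))
        / (1 - Complex.exp (-(⟪α, x⟫ : ℝ) : ℂ))
      = ∑ α ∈ Rp ∩ Rs i, ((k α * ⟪α, projSpan (Rs i) ξ⟫ : ℝ) : ℂ) * (f (projSpan (Rs i) x) - f (sRefl α (projSpan (Rs i) x)))
        / (1 - Complex.exp (-(⟪α, projSpan (Rs i) x⟫ : ℝ) : ℂ)) := by
    rw [← Finset.sum_subset (Finset.inter_subset_left : Rp ∩ Rs i ⊆ Rp)]
    · refine Finset.sum_congr rfl ?_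
      intro α hα
      have hαi : α ∈ Rs i := Finset.mem_of_mem_inter_right hα
      have hαs : α ∈ s := hmem α hαi
      have hix : ⟪α, projSpan (Rs i) x⟫ = ⟪α, x⟫ := inner_projSpan_of_mem (Rs i) hαs x
      have hiξ : ⟪α, projSpan (Rs i) ξ⟫ = ⟪α, ξ⟫ := inner_projSpan_of_mem (Rs i) hαs ξ
      have hsr : projSpan (Rs i) (sRefl α x) = sRefl α (projSpan (Rs i) x) := by
        rw [projSpan_sRefl_aux, projSpan_of_mem (Rs i) hαs, sRefl, hix]
      simp only [hsr, hix, hiξ]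
    · intro α hαRp hαn
      have hαni : α ∉ Rs i := fun h => hαn (Finset.mem_inter.2 ⟨hαRp, h⟩)
      have hsr : projSpan (Rs i) (sRefl α x) = projSpan (Rs i) x := by
        rw [projSpan_sRefl_aux,
          projSpan_of_perp (Rs i) (hperp α (hRpR α hαRp) hαni), smul_zero, sub_zero]
      simp only [hsr, sub_self, mul_zero, zero_div]
  simp only [cherednik, h1, h2]
  rw [h4]
  have h3' : ((⟪rho (Rp ∩ Rs i) k, projSpan (Rs i) ξ⟫ : ℝ) : ℂ) = ((⟪rho (Rp ∩ Rs i) k, ξ⟫ : ℝ) : ℂ) := by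
    rw [h3]
  rw [h3']
  push_cast
  ring
end

section
/- Let R = R^1 ⊔ … ⊔ R^m be a partition of the integral root system R such that the spans 𝔰_i = span_ℝ(R^i) are pairwise orthogonal, set R^i_+ = R_+ ∩ R^i, k_i = k|_{R^i}, let π_{𝔰_i} be the orthogonal projection onto 𝔰_i, and let 𝔠 = (span_ℝ R)^⊥ with orthogonal projection π_𝔠. Let λ ∈ 𝔞_ℂ. Suppose for each i that g_i : 𝔞 → ℂ is continuously differentiable with g_i(0) = 1, g_i(x) = g_i(π_{𝔰_i} x) for all x, and D_ξ(R^i_+, k_i) g_i(x) = ⟨π_{𝔰_i} λ, ξ⟩ g_i(x) for all ξ ∈ 𝔞 and all x with ⟨α, x⟩ ≠ 0 for all α ∈ R^i. Then the function f(x) := e^{⟨π_𝔠 λ, π_𝔠 x⟩} g_1(x) ⋯ g_m(x) satisfies f(0) = 1 and D_ξ(R_+,k) f(x) = ⟨λ, ξ⟩ f(x) for all ξ ∈ 𝔞 and all regular x ∈ 𝔞. -/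
open scoped BigOperators RealInnerProductSpace
open Finset

variable {𝔞 : Type*} [NormedAddCommGroup 𝔞] [InnerProductSpace ℝ 𝔞] [FiniteDimensional ℝ 𝔞]

/-- The ℂ-bilinear pairing `⟨λ, ξ⟩` of `λ = λre + i·λim ∈ 𝔞_ℂ` with `ξ ∈ 𝔞`. -/
noncomputable def pairC (lamRe lamIm ξ : 𝔞) : ℂ :=
  (⟪lamRe, ξ⟫ : ℂ) + Complex.I * (⟪lamIm, ξ⟫ : ℂ)

/- ### Auxiliary lemmas -/

lemma aux_mem_orthogonal_span {S : Finset 𝔞} {α : 𝔞} (h : ∀ β ∈ S, ⟪α, β⟫ = 0) :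
    α ∈ (Submodule.span ℝ (S : Set 𝔞))ᗮ := by
  rw [Submodule.mem_orthogonal]
  intro u hu
  induction hu using Submodule.span_induction with
  | mem β hβ => rw [real_inner_comm]; exact h β (by simpa using hβ)
  | zero => simp
  | add u v _ _ h1 h2 => rw [inner_add_left, h1, h2, add_zero]
  | smul c u _ h1 => rw [real_inner_smul_left, h1, mul_zero]

/-- Orthogonal decomposition of a vector along the pieces of an orthogonal partition. -/
lemma aux_decomp [DecidableEq 𝔞] (R : Finset 𝔞) {m : ℕ} (Rs : Fin m → Finset 𝔞)
    (hpart : ∀ α : 𝔞, α ∈ R ↔ ∃ i, α ∈ Rs i)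
    (horth : ∀ i j, i ≠ j → ∀ α ∈ Rs i, ∀ β ∈ Rs j, ⟪α, β⟫ = 0)
    (v : 𝔞) : v = projPerp R v + ∑ i, projSpan (Rs i) v := by
  have hsub : ∀ i, Submodule.span ℝ ((Rs i : Set 𝔞)) ≤ Submodule.span ℝ (R : Set 𝔞) := fun i =>
    Submodule.span_mono (fun α hα => by
      simp only [Finset.mem_coe] at hα ⊢; exact (hpart α).2 ⟨i, hα⟩)
  have hK : (Submodule.orthogonalProjectionOnto (Submodule.span ℝ (R : Set 𝔞)) v : 𝔞)
      = ∑ i, projSpan (Rs i) v := by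
    rw [← Submodule.starProjection_apply]
    apply Submodule.eq_starProjection_of_mem_of_inner_eq_zero
    · exact Submodule.sum_mem _ fun i _ => hsub i (SetLike.coe_mem _)
    · intro w hw
      induction hw using Submodule.span_induction with
      | mem α hα =>
        obtain ⟨i, hi⟩ := (hpart α).1 (by simpa using hα)
        have hsum : ∑ j, ⟪projSpan (Rs j) v, α⟫ = ⟪v, α⟫ := by
          rw [Finset.sum_eq_single i]
          · have hαmem : α ∈ Submodule.span ℝ ((Rs i : Set 𝔞)) :=
              Submodule.subset_span (by simpa using hi)
            have h0 := Submodule.starProjection_inner_eq_zero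
              (K := Submodule.span ℝ ((Rs i : Set 𝔞))) v α hαmem
            rw [Submodule.starProjection_apply, inner_sub_left] at h0
            simp only [projSpan]
            linarith
          · intro j _ hj
            have hαperp : α ∈ (Submodule.span ℝ ((Rs j : Set 𝔞)))ᗮ :=
              aux_mem_orthogonal_span (fun β hβ => horth i j (fun h => hj h.symm) α hi β hβ)
            have := (Submodule.mem_orthogonal _ α).1 hαperp (projSpan (Rs j) v)
              (SetLike.coe_mem _)
            exact this
          · intro h; exact absurd (Finset.mem_univ i) h
        rw [inner_sub_left, sum_inner, hsum, sub_self]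
      | zero => simp
      | add u w _ _ h1 h2 => rw [inner_add_right, h1, h2, add_zero]
      | smul c u _ h1 => rw [real_inner_smul_right, h1, mul_zero]
  have := Submodule.starProjection_add_starProjection_orthogonal
    (K := Submodule.span ℝ (R : Set 𝔞)) v
  rw [Submodule.starProjection_apply, Submodule.starProjection_apply] at this
  rw [hK] at this
  rw [projPerp, add_comm]
  exact this.symm

lemma aux_inner_projPerp (R : Finset 𝔞) (a y : 𝔞) :
    ⟪projPerp R a, projPerp R y⟫ = ⟪projPerp R a, y⟫ := by
  simp only [projPerp]
  have h0 := Submodule.starProjection_inner_eq_zero (K := (Submodule.span ℝ (R : Set 𝔞))ᗮ) y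
    ((Submodule.orthogonalProjectionOnto (Submodule.span ℝ (R : Set 𝔞))ᗮ a : 𝔞)) (SetLike.coe_mem _)
  rw [Submodule.starProjection_apply, inner_sub_left] at h0
  have h1 := real_inner_comm ((Submodule.orthogonalProjectionOnto (Submodule.span ℝ (R : Set 𝔞))ᗮ a : 𝔞))
    ((Submodule.orthogonalProjectionOnto (Submodule.span ℝ (R : Set 𝔞))ᗮ y : 𝔞))
  have h2 := real_inner_comm ((Submodule.orthogonalProjectionOnto (Submodule.span ℝ (R : Set 𝔞))ᗮ a : 𝔞)) y
  linarith

/-- Algebraic core: assembling the Cherednik eigen-equation for a product. -/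
lemma aux_main [DecidableEq 𝔞] {m : ℕ}
    (Rp : Finset 𝔞) (Rps : Fin m → Finset 𝔞)
    (hU : Rp = Finset.univ.biUnion Rps)
    (hd : ∀ i j, i ≠ j → Disjoint (Rps i) (Rps j))
    (k : 𝔞 → ℝ) (ξ x : 𝔞)
    (g : Fin m → 𝔞 → ℂ) (E : 𝔞 → ℂ) (ℓE μ : ℂ) (μi : Fin m → ℂ)
    (hEx : ∀ i, ∀ α ∈ Rps i, E (sRefl α x) = E x)
    (hgx : ∀ i j, i ≠ j → ∀ α ∈ Rps i, g j (sRefl α x) = g j x)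
    (hfd : fderiv ℝ (fun y => E y * ∏ i, g i y) x ξ
      = E x * ∑ i, (∏ j ∈ Finset.univ.erase i, g j x) * fderiv ℝ (g i) x ξ
        + (∏ i, g i x) * (E x * ℓE))
    (hrho : (⟪rho Rp k, ξ⟫ : ℝ) = ∑ i, ⟪rho (Rps i) k, ξ⟫)
    (hch : ∀ i, cherednik (Rps i) k ξ (g i) x = μi i * g i x)
    (hμ : μ = ℓE + ∑ i, μi i) :
    cherednik Rp k ξ (fun y => E y * ∏ i, g i y) x = μ * (E x * ∏ i, g i x) := by
  have hGsplit : ∀ i : Fin m, (∏ j, g j x) = g i x * ∏ j ∈ Finset.univ.erase i, g j x :=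
    fun i => (Finset.mul_prod_erase Finset.univ (fun j => g j x) (Finset.mem_univ i)).symm
  -- value of the product at a reflected point
  have hGrefl : ∀ i, ∀ α ∈ Rps i,
      (∏ j, g j (sRefl α x)) = g i (sRefl α x) * ∏ j ∈ Finset.univ.erase i, g j x := by
    intro i α hα
    rw [← Finset.mul_prod_erase Finset.univ (fun j => g j (sRefl α x)) (Finset.mem_univ i)]
    congr 1
    refine Finset.prod_congr rfl fun j hj => ?_
    exact hgx i j (fun h => (Finset.mem_erase.1 hj).1 h.symm) α hα
  -- split the big sum
  have hdisj' : Set.PairwiseDisjoint (↑(Finset.univ : Finset (Fin m))) Rps :=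
    fun i _ j _ hij => hd i j hij
  simp only [cherednik] at hch ⊢
  rw [hfd, hrho, hU, Finset.sum_biUnion hdisj']
  beta_reduce
  -- rewrite each inner sum
  have hinner : ∀ i : Fin m, ∑ α ∈ Rps i,
        ((k α * ⟪α, ξ⟫ : ℝ) : ℂ) *
          (E x * ∏ j, g j x - E (sRefl α x) * ∏ j, g j (sRefl α x))
          / (1 - Complex.exp (-(⟪α, x⟫ : ℝ) : ℂ))
      = E x * ((∏ j ∈ Finset.univ.erase i, g j x) *
          ∑ α ∈ Rps i, ((k α * ⟪α, ξ⟫ : ℝ) : ℂ) * (g i x - g i (sRefl α x))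
            / (1 - Complex.exp (-(⟪α, x⟫ : ℝ) : ℂ))) := by
    intro i
    rw [Finset.mul_sum, Finset.mul_sum]
    refine Finset.sum_congr rfl fun α hα => ?_
    rw [hEx i α hα, hGrefl i α hα, hGsplit i]
    ring
  rw [Finset.sum_congr rfl (fun i _ => hinner i)]
  have hstep : ∀ i : Fin m,
      E x * ((∏ j ∈ Finset.univ.erase i, g j x) *
        ∑ α ∈ Rps i, ((k α * ⟪α, ξ⟫ : ℝ) : ℂ) * (g i x - g i (sRefl α x))
          / (1 - Complex.exp (-(⟪α, x⟫ : ℝ) : ℂ)))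
      = μi i * (E x * ∏ j, g j x)
        - E x * ((∏ j ∈ Finset.univ.erase i, g j x) * fderiv ℝ (g i) x ξ)
        + ((⟪rho (Rps i) k, ξ⟫ : ℝ) : ℂ) * (E x * ∏ j, g j x) := by
    intro i
    have h := hch i
    rw [hGsplit i]
    linear_combination (E x * (∏ j ∈ Finset.univ.erase i, g j x)) * h
  rw [Finset.sum_congr rfl (fun i _ => hstep i)]
  rw [hμ]
  push_cast
  rw [Finset.sum_add_distrib, Finset.sum_sub_distrib, ← Finset.sum_mul, ← Finset.sum_mul,
    Finset.mul_sum]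
  ring

/-- If, for an orthogonal partition `R = R¹ ⊔ … ⊔ Rᵐ`, each `g_i` is a
`π_{𝔰_i}`-factorizing eigenfunction of the Cherednik operators of `(Rⁱ_+, k_i)` with
spectral parameter `π_{𝔰_i} λ`, then `f(x) = e^{⟨π_𝔠 λ, π_𝔠 x⟩} g_1(x) ⋯ g_m(x)` is an
eigenfunction of `D(R_+,k)` with spectral parameter `λ`, normalized by `f(0) = 1`. -/
theorem cherednik_eigenfunction_product_extension [DecidableEq 𝔞]
    (R : Finset 𝔞) (hR : IsIntegralRootSystem R)
    (Rp : Finset 𝔞) (hRp : IsPositiveSystem R Rp)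
    (k : 𝔞 → ℝ) (hk : ∀ α ∈ R, ∀ β ∈ R, k (sRefl α β) = k β)
    (m : ℕ) (Rs : Fin m → Finset 𝔞)
    (hpart : ∀ α : 𝔞, α ∈ R ↔ ∃ i, α ∈ Rs i)
    (hdisj : ∀ i j, i ≠ j → Disjoint (Rs i) (Rs j))
    (horth : ∀ i j, i ≠ j → ∀ α ∈ Rs i, ∀ β ∈ Rs j, ⟪α, β⟫ = 0)
    (lamRe lamIm : 𝔞) (g : Fin m → 𝔞 → ℂ)
    (hg : ∀ i, ContDiff ℝ 1 (g i)) (hg0 : ∀ i, g i 0 = 1)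
    (hgproj : ∀ i, ∀ x : 𝔞, g i x = g i (projSpan (Rs i) x))
    (hgeig : ∀ i, ∀ ξ x : 𝔞, (∀ α ∈ Rs i, ⟪α, x⟫ ≠ 0) →
      cherednik (Rp ∩ Rs i) k ξ (g i) x
        = pairC (projSpan (Rs i) lamRe) (projSpan (Rs i) lamIm) ξ * g i x) :
    (Complex.exp (pairC (projPerp R lamRe) (projPerp R lamIm) (projPerp R (0 : 𝔞)))
        * ∏ i, g i 0 = 1) ∧
    ∀ ξ x : 𝔞, IsRegularPt R x →
      cherednik Rp k ξ
          (fun y => Complex.exp (pairC (projPerp R lamRe) (projPerp R lamIm) (projPerp R y))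
            * ∏ i, g i y) x
        = pairC lamRe lamIm ξ
          * (Complex.exp (pairC (projPerp R lamRe) (projPerp R lamIm) (projPerp R x))
            * ∏ i, g i x) := by
  classical
  constructor
  · simp [projPerp, pairC, hg0]
  intro ξ x hx
  obtain ⟨v, hv, hmem⟩ := hRp
  have hRpR : ∀ α ∈ Rp, α ∈ R := fun α hα => ((hmem α).1 hα).1
  -- the linear functional defining the exponential factor
  set ℓ : 𝔞 →L[ℝ] ℂ := Complex.ofRealCLM.comp (innerSL ℝ (projPerp R lamRe))
      + Complex.I • Complex.ofRealCLM.comp (innerSL ℝ (projPerp R lamIm)) with hℓdef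
  have hℓ : ∀ y : 𝔞, ℓ y = pairC (projPerp R lamRe) (projPerp R lamIm) y := by
    intro y
    simp [hℓdef, pairC, smul_eq_mul]
  have hEeq : ∀ y : 𝔞,
      Complex.exp (pairC (projPerp R lamRe) (projPerp R lamIm) (projPerp R y))
        = Complex.exp (ℓ y) := by
    intro y
    rw [hℓ]
    congr 1
    simp only [pairC]
    rw [← aux_inner_projPerp R lamRe y, ← aux_inner_projPerp R lamIm y]
  have hfun : (fun y : 𝔞 =>
        Complex.exp (pairC (projPerp R lamRe) (projPerp R lamIm) (projPerp R y)) * ∏ i, g i y)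
      = fun y => Complex.exp (ℓ y) * ∏ i, g i y :=
    funext fun y => by rw [hEeq y]
  rw [hfun, hEeq x]
  -- apply the algebraic core lemma
  refine aux_main Rp (fun i => Rp ∩ Rs i) ?_ ?_ k ξ x g (fun y => Complex.exp (ℓ y))
      (ℓ ξ) _ (fun i => pairC (projSpan (Rs i) lamRe) (projSpan (Rs i) lamIm) ξ)
      ?_ ?_ ?_ ?_ ?_ ?_
  · -- hU
    ext α
    simp only [Finset.mem_biUnion, Finset.mem_univ, true_and, Finset.mem_inter]
    constructor
    · intro h
      obtain ⟨i, hi⟩ := (hpart α).1 (hRpR α h)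
      exact ⟨i, h, hi⟩
    · rintro ⟨i, h, _⟩; exact h
  · -- hd
    intro i j hij
    exact (hdisj i j hij).mono (Finset.inter_subset_right) (Finset.inter_subset_right)
  · -- hEx
    intro i α hα
    have hαR : α ∈ R := hRpR α (Finset.mem_inter.1 hα).1
    have hαK : α ∈ Submodule.span ℝ (R : Set 𝔞) := Submodule.subset_span (by simpa using hαR)
    have h1 : ⟪projPerp R lamRe, α⟫ = 0 := by
      rw [real_inner_comm]
      exact (Submodule.mem_orthogonal _ _).1 (SetLike.coe_mem _) α hαK
    have h2 : ⟪projPerp R lamIm, α⟫ = 0 := by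
      rw [real_inner_comm]
      exact (Submodule.mem_orthogonal _ _).1 (SetLike.coe_mem _) α hαK
    show Complex.exp (ℓ (sRefl α x)) = Complex.exp (ℓ x)
    have : ℓ (sRefl α x) = ℓ x := by
      rw [hℓ, hℓ]
      simp [pairC, sRefl, inner_sub_right, real_inner_smul_right, h1, h2]
    rw [this]
  · -- hgx
    intro i j hij α hα
    have hαRs : α ∈ Rs i := (Finset.mem_inter.1 hα).2
    have hαperp : α ∈ (Submodule.span ℝ ((Rs j : Set 𝔞)))ᗮ :=
      aux_mem_orthogonal_span (fun β hβ => horth i j hij α hαRs β hβ)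
    have hproj : projSpan (Rs j) (sRefl α x) = projSpan (Rs j) x := by
      simp [projSpan, sRefl, map_sub, map_smul,
        Submodule.orthogonalProjectionOnto_apply_of_mem_orthogonal hαperp]
    rw [hgproj j (sRefl α x), hproj, ← hgproj j x]
  · -- hfd
    have hgd : ∀ i : Fin m, HasFDerivAt (g i) (fderiv ℝ (g i) x) x := fun i =>
      (((hg i).differentiable one_ne_zero) x).hasFDerivAt
    have hGd : HasFDerivAt (fun y => ∏ i, g i y)
        (∑ i, (∏ j ∈ Finset.univ.erase i, g j x) • fderiv ℝ (g i) x) x :=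
      HasFDerivAt.finset_prod (fun i _ => hgd i)
    have hEd : HasFDerivAt (fun y : 𝔞 => Complex.exp (ℓ y))
        (Complex.exp (ℓ x) • ℓ) x := (ℓ.hasFDerivAt).cexp
    have hfd : HasFDerivAt (fun y => Complex.exp (ℓ y) * ∏ i, g i y) _ x := hEd.mul hGd
    rw [hfd.fderiv]
    simp only [ContinuousLinearMap.add_apply, ContinuousLinearMap.smul_apply,
      ContinuousLinearMap.sum_apply, smul_eq_mul, Finset.mul_sum]
    try ring
  · -- hrho
    have hdisj' : Set.PairwiseDisjoint (↑(Finset.univ : Finset (Fin m)))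
        (fun i => Rp ∩ Rs i) := fun i _ j _ hij =>
      (hdisj i j hij).mono (Finset.inter_subset_right) (Finset.inter_subset_right)
    have hU : Rp = Finset.univ.biUnion (fun i => Rp ∩ Rs i) := by
      ext α
      simp only [Finset.mem_biUnion, Finset.mem_univ, true_and, Finset.mem_inter]
      constructor
      · intro h
        obtain ⟨i, hi⟩ := (hpart α).1 (hRpR α h)
        exact ⟨i, h, hi⟩
      · rintro ⟨i, h, _⟩; exact h
    have hrv : rho Rp k = ∑ i, rho (Rp ∩ Rs i) k := by
      simp only [rho, ← Finset.smul_sum]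
      congr 1
      conv_lhs => rw [hU]
      exact Finset.sum_biUnion hdisj'
    rw [hrv, sum_inner]
  · -- hch
    intro i
    exact hgeig i ξ x (fun α hα => hx α ((hpart α).2 ⟨i, hα⟩))
  · -- hμ
    have hRe := aux_decomp R Rs hpart horth lamRe
    have hIm := aux_decomp R Rs hpart horth lamIm
    have hre : ⟪lamRe, ξ⟫ = ⟪projPerp R lamRe, ξ⟫ + ∑ i, ⟪projSpan (Rs i) lamRe, ξ⟫ := by
      conv_lhs => rw [hRe]
      rw [inner_add_left, sum_inner]
    have him : ⟪lamIm, ξ⟫ = ⟪projPerp R lamIm, ξ⟫ + ∑ i, ⟪projSpan (Rs i) lamIm, ξ⟫ := by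
      conv_lhs => rw [hIm]
      rw [inner_add_left, sum_inner]
    rw [hℓ]
    simp only [pairC, hre, him, Complex.ofReal_add, Complex.ofReal_sum]
    rw [Finset.sum_add_distrib]
    simp only [← Finset.mul_sum]
    ring
end

section
/- Let α_j ∈ R_+ be a simple root, i.e. (1/2)α_j ∉ R and the reflection s_j := s_{α_j} maps R_+ \ {α_j, 2α_j} bijectively onto itself, and set k_j = k_{α_j} + 2k_{2α_j}, where k_{2α_j} := 0 if 2α_j ∉ R. Then for every continuously differentiable f : 𝔞 → ℂ, every ξ ∈ 𝔞 and every regular x ∈ 𝔞: (D_ξ(R_+,k) f)(s_j x) − (D_{s_j ξ}(R_+,k)(f ∘ s_j))(x) = −k_j ⟨ξ, α_j⟩ f(x). -/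
open scoped BigOperators RealInnerProductSpace
open Finset

variable {𝔞 : Type*} [NormedAddCommGroup 𝔞] [InnerProductSpace ℝ 𝔞] [FiniteDimensional ℝ 𝔞]

section Aux
set_option linter.unusedSectionVars false

lemma sRefl_apply' (a x : 𝔞) : sRefl a x = x - (2 * ⟪a, x⟫ / ⟪a, a⟫) • a := rfl

lemma inner_sRefl_right (a u v : 𝔞) : ⟪u, sRefl a v⟫ = ⟪sRefl a u, v⟫ := by
  simp only [sRefl, inner_sub_left, inner_sub_right, real_inner_smul_left, real_inner_smul_right]
  rw [real_inner_comm u a]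
  ring

lemma sRefl_sub (a u v : 𝔞) : sRefl a (u - v) = sRefl a u - sRefl a v := by
  simp only [sRefl, inner_sub_right]
  rw [show 2 * (⟪a,u⟫ - ⟪a,v⟫) / ⟪a,a⟫ = 2 * ⟪a,u⟫ / ⟪a,a⟫ - 2 * ⟪a,v⟫ / ⟪a,a⟫ by ring,
    sub_smul]
  abel

lemma sRefl_smul (a : 𝔞) (c : ℝ) (u : 𝔞) : sRefl a (c • u) = c • sRefl a u := by
  simp only [sRefl, real_inner_smul_right, smul_sub, smul_smul]
  rw [show c * (2 * ⟪a,u⟫ / ⟪a,a⟫) = 2 * (c * ⟪a,u⟫) / ⟪a,a⟫ by ring]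

lemma inner_self_sRefl (a x : 𝔞) (ha : ⟪a,a⟫ ≠ (0:ℝ)) : ⟪a, sRefl a x⟫ = -⟪a, x⟫ := by
  simp only [sRefl, inner_sub_right, real_inner_smul_right]
  field_simp
  ring

lemma sRefl_sRefl (a x : 𝔞) (ha : ⟪a,a⟫ ≠ (0:ℝ)) : sRefl a (sRefl a x) = x := by
  rw [sRefl_apply' a (sRefl a x), inner_self_sRefl a x ha,
    show 2 * -⟪a,x⟫ / ⟪a,a⟫ = -(2 * ⟪a,x⟫ / ⟪a,a⟫) by ring, neg_smul, sub_neg_eq_add,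
    sRefl_apply']
  abel

lemma inner_sRefl_sRefl (a u v : 𝔞) (ha : ⟪a,a⟫ ≠ (0:ℝ)) :
    ⟪sRefl a u, sRefl a v⟫ = ⟪u, v⟫ := by
  rw [← inner_sRefl_right, sRefl_sRefl a v ha]

lemma sRefl_self (a : 𝔞) (ha : ⟪a,a⟫ ≠ (0:ℝ)) : sRefl a a = -a := by
  rw [sRefl_apply', mul_div_assoc, div_self ha, mul_one, two_smul]
  abel

lemma sRefl_conj (a b y : 𝔞) (ha : ⟪a,a⟫ ≠ (0:ℝ)) :
    sRefl a (sRefl b y) = sRefl (sRefl a b) (sRefl a y) := by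
  rw [sRefl_apply' b y, sRefl_sub, sRefl_smul,
    sRefl_apply' (sRefl a b) (sRefl a y),
    inner_sRefl_sRefl a b y ha, inner_sRefl_sRefl a b b ha]

lemma sRefl_two_smul (a x : 𝔞) (ha : ⟪a,a⟫ ≠ (0:ℝ)) :
    sRefl ((2:ℝ) • a) x = sRefl a x := by
  simp only [sRefl, real_inner_smul_left, real_inner_smul_right, smul_smul]
  congr 1
  congr 1
  field_simp

noncomputable def sReflCLM (a : 𝔞) : 𝔞 →L[ℝ] 𝔞 :=
  ContinuousLinearMap.id ℝ 𝔞 - ((2 / ⟪a,a⟫) • (innerSL ℝ a)).smulRight a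

lemma sReflCLM_apply (a x : 𝔞) : sReflCLM a x = sRefl a x := by
  simp only [sReflCLM, sRefl, ContinuousLinearMap.sub_apply, ContinuousLinearMap.id_apply,
    ContinuousLinearMap.smulRight_apply, ContinuousLinearMap.smul_apply, innerSL_apply_apply,
    smul_eq_mul]
  rw [show 2 / ⟪a,a⟫ * ⟪a,x⟫ = 2 * ⟪a,x⟫ / ⟪a,a⟫ by ring]

lemma one_sub_exp_ne (t : ℝ) (ht : t ≠ 0) : (1 : ℂ) - Complex.exp (t:ℂ) ≠ 0 := by
  rw [sub_ne_zero, ← Complex.ofReal_exp]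
  intro h
  have h' : Real.exp t = Real.exp 0 := by
    rw [Real.exp_zero]; exact_mod_cast h.symm
  exact ht (Real.exp_eq_exp.mp h')

lemma key_frac (t : ℝ) (ht : t ≠ 0) (z : ℂ) :
    z / (1 - Complex.exp (t:ℂ)) + z / (1 - Complex.exp (-(t:ℂ)))
      = z := by
  have h1 : (1:ℂ) - Complex.exp (t:ℂ) ≠ 0 := one_sub_exp_ne t ht
  have h2 : (1:ℂ) - Complex.exp (-(t:ℂ)) ≠ 0 := by
    have := one_sub_exp_ne (-t) (neg_ne_zero.2 ht)
    push_cast at this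
    exact this
  have hm : Complex.exp (t:ℂ) * Complex.exp (-(t:ℂ)) = 1 := by
    rw [← Complex.exp_add]; simp
  field_simp
  linear_combination -z * hm

lemma sum_split {M : Type*} [AddCommGroup M] [DecidableEq 𝔞] (Rp : Finset 𝔞) (a b : 𝔞)
    (ha : a ∈ Rp) (hab : b ≠ a) (g : 𝔞 → M) :
    ∑ α ∈ Rp, g α
      = (∑ α ∈ (Rp.erase a).erase b, g α) + g a + (if b ∈ Rp then g b else 0) := by
  by_cases hb : b ∈ Rp
  · have h1 : b ∈ Rp.erase a := Finset.mem_erase.2 ⟨hab, hb⟩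
    rw [if_pos hb, ← Finset.add_sum_erase Rp g ha, ← Finset.add_sum_erase (Rp.erase a) g h1]
    abel
  · have h1 : b ∉ Rp.erase a := fun h => hb (Finset.mem_of_mem_erase h)
    rw [if_neg hb, Finset.erase_eq_of_notMem h1, ← Finset.add_sum_erase Rp g ha]
    abel

lemma sum_reindex {M : Type*} [AddCommMonoid M] [DecidableEq 𝔞] (A : Finset 𝔞) (a : 𝔞)
    (ha : ⟪a,a⟫ ≠ (0:ℝ)) (hA : A.image (sRefl a) = A) (g : 𝔞 → M) :
    ∑ α ∈ A, g α = ∑ α ∈ A, g (sRefl a α) := by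
  conv_lhs => rw [← hA]
  rw [Finset.sum_image]
  intro u _ w _ h
  have h2 := congrArg (sRefl a) h
  rwa [sRefl_sRefl a u ha, sRefl_sRefl a w ha] at h2

end Aux

/-- Sahi's recurrence for a simple root `α_j`:
`(D_ξ f)(s_j x) − (D_{s_j ξ}(f ∘ s_j))(x) = −k_j ⟨ξ, α_j⟩ f(x)` with
`k_j = k_{α_j} + 2 k_{2α_j}`. -/
theorem cherednik_simple_root_relation [DecidableEq 𝔞]
    (R : Finset 𝔞) (hR : IsIntegralRootSystem R)
    (Rp : Finset 𝔞) (hRp : IsPositiveSystem R Rp)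
    (k : 𝔞 → ℝ) (hk : ∀ α ∈ R, ∀ β ∈ R, k (sRefl α β) = k β)
    (αj : 𝔞) (hαj : αj ∈ Rp)
    (hhalf : ((1:ℝ)/2) • αj ∉ R)
    (hsimple : ((Rp.erase αj).erase ((2:ℝ) • αj)).image (sRefl αj)
      = (Rp.erase αj).erase ((2:ℝ) • αj))
    (f : 𝔞 → ℂ) (hf : ContDiff ℝ 1 f) (ξ x : 𝔞) (hx : IsRegularPt R x) :
    cherednik Rp k ξ f (sRefl αj x)
      - cherednik Rp k (sRefl αj ξ) (fun y => f (sRefl αj y)) x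
      = -(((k αj + 2 * (if (2:ℝ) • αj ∈ R then k ((2:ℝ) • αj) else 0)) * ⟪ξ, αj⟫ : ℝ) : ℂ)
          * f x := by
  obtain ⟨v, hv, hmem⟩ := hRp
  have hsub : ∀ α ∈ Rp, α ∈ R := fun α h => ((hmem α).1 h).1
  have hαjR : αj ∈ R := hsub αj hαj
  have hαj0 : αj ≠ 0 := fun h => hR.1 (h ▸ hαjR)
  have ha : ⟪αj,αj⟫ ≠ (0:ℝ) := fun h => hαj0 (inner_self_eq_zero.mp h)
  have ht : ⟪αj, x⟫ ≠ 0 := hx αj hαjR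
  have h2iff : ((2:ℝ)•αj ∈ Rp) ↔ ((2:ℝ)•αj ∈ R) := by
    constructor
    · exact hsub _
    · intro h
      refine (hmem _).2 ⟨h, ?_⟩
      rw [real_inner_smul_left]
      have := ((hmem αj).1 hαj).2
      linarith
  have h2ne : (2:ℝ)•αj ≠ αj := by
    intro h
    apply hαj0
    have h1 : ((2:ℝ)-1)•αj = 0 := by rw [sub_smul, one_smul, h, sub_self]
    norm_num at h1
    exact h1
  have hAsub : ∀ β ∈ (Rp.erase αj).erase ((2:ℝ)•αj), β ∈ R :=
    fun β h => hsub β (Finset.mem_of_mem_erase (Finset.mem_of_mem_erase h))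
  have hsxx : sRefl αj (sRefl αj x) = x := sRefl_sRefl αj x ha
  have hsξξ : sRefl αj (sRefl αj ξ) = ξ := sRefl_sRefl αj ξ ha
  have hinx : ⟪αj, sRefl αj x⟫ = -⟪αj, x⟫ := inner_self_sRefl αj x ha
  have hinξ : ⟪αj, sRefl αj ξ⟫ = -⟪αj, ξ⟫ := inner_self_sRefl αj ξ ha
  -- the A-sum of k α ⟪α, αj⟫ vanishes
  have hAzero : ∑ α ∈ (Rp.erase αj).erase ((2:ℝ)•αj), k α * ⟪α, αj⟫ = 0 := by
    have h1 := sum_reindex ((Rp.erase αj).erase ((2:ℝ)•αj)) αj ha hsimple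
      (fun α => k α * ⟪α, αj⟫)
    have h2 : ∀ β ∈ (Rp.erase αj).erase ((2:ℝ)•αj),
        k (sRefl αj β) * ⟪sRefl αj β, αj⟫ = -(k β * ⟪β, αj⟫) := by
      intro β hβ
      rw [hk αj hαjR β (hAsub β hβ), ← inner_sRefl_right αj β αj, sRefl_self αj ha,
        inner_neg_right]
      ring
    rw [Finset.sum_congr rfl h2] at h1
    rw [Finset.sum_neg_distrib] at h1
    linarith
  -- inner product of rho with αj
  have hρ : ⟪rho Rp k, αj⟫
      = 1/2 * ((k αj + 2 * (if (2:ℝ)•αj ∈ R then k ((2:ℝ)•αj) else 0)) * ⟪αj,αj⟫) := by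
    rw [rho, real_inner_smul_left, sum_inner]
    simp only [real_inner_smul_left]
    rw [sum_split Rp αj ((2:ℝ)•αj) hαj h2ne (fun α => k α * ⟪α,αj⟫)]
    simp only [h2iff]
    rw [hAzero]
    by_cases h2 : (2:ℝ)•αj ∈ R
    · rw [if_pos h2, if_pos h2, real_inner_smul_left]
      ring
    · rw [if_neg h2, if_neg h2]; ring
  -- rho difference
  have hξs : ξ - sRefl αj ξ = (2 * ⟪αj,ξ⟫ / ⟪αj,αj⟫) • αj := by
    rw [sRefl_apply']
    abel
  have hP : ⟪rho Rp k, ξ⟫ - ⟪rho Rp k, sRefl αj ξ⟫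
      = (k αj + 2 * (if (2:ℝ)•αj ∈ R then k ((2:ℝ)•αj) else 0)) * ⟪αj, ξ⟫ := by
    rw [← inner_sub_right, hξs, real_inner_smul_right, hρ]
    field_simp
  -- derivative part
  have hdf : DifferentiableAt ℝ f (sRefl αj x) := (hf.differentiable one_ne_zero).differentiableAt
  have hD : fderiv ℝ (fun y => f (sRefl αj y)) x (sRefl αj ξ) = fderiv ℝ f (sRefl αj x) ξ := by
    have heq : (fun y => f (sRefl αj y)) = f ∘ (sReflCLM αj) := by
      funext y; simp [sReflCLM_apply]
    rw [heq, fderiv_comp x (by rw [sReflCLM_apply]; exact hdf)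
      (sReflCLM αj).differentiableAt, (sReflCLM αj).fderiv]
    simp only [ContinuousLinearMap.comp_apply]
    rw [sReflCLM_apply, sReflCLM_apply, sRefl_sRefl αj ξ ha]
  have hterm : ∀ β ∈ (Rp.erase αj).erase ((2:ℝ)•αj),
      ((k (sRefl αj β) * ⟪sRefl αj β, ξ⟫ : ℝ) : ℂ)
          * (f (sRefl αj x) - f (sRefl (sRefl αj β) (sRefl αj x)))
          / (1 - Complex.exp (-(⟪sRefl αj β, sRefl αj x⟫ : ℝ) : ℂ))
        = ((k β * ⟪β, sRefl αj ξ⟫ : ℝ) : ℂ)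
          * (f (sRefl αj x) - f (sRefl αj (sRefl β x)))
          / (1 - Complex.exp (-(⟪β, x⟫ : ℝ) : ℂ)) := by
    intro β hβ
    rw [hk αj hαjR β (hAsub β hβ), ← inner_sRefl_right αj β ξ, ← sRefl_conj αj β x ha,
      inner_sRefl_sRefl αj β x ha]
  have hS : (∑ α ∈ Rp, ((k α * ⟪α, ξ⟫ : ℝ) : ℂ)
          * (f (sRefl αj x) - f (sRefl α (sRefl αj x)))
          / (1 - Complex.exp (-(⟪α, sRefl αj x⟫ : ℝ) : ℂ)))
      - (∑ α ∈ Rp, ((k α * ⟪α, sRefl αj ξ⟫ : ℝ) : ℂ)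
          * (f (sRefl αj x) - f (sRefl αj (sRefl α x)))
          / (1 - Complex.exp (-(⟪α, x⟫ : ℝ) : ℂ)))
      = (((k αj + 2 * (if (2:ℝ)•αj ∈ R then k ((2:ℝ)•αj) else 0)) * ⟪αj, ξ⟫ : ℝ) : ℂ)
          * (f (sRefl αj x) - f x) := by
    rw [sum_split Rp αj ((2:ℝ)•αj) hαj h2ne (fun α => ((k α * ⟪α, ξ⟫ : ℝ) : ℂ)
          * (f (sRefl αj x) - f (sRefl α (sRefl αj x)))
          / (1 - Complex.exp (-(⟪α, sRefl αj x⟫ : ℝ) : ℂ))),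
        sum_split Rp αj ((2:ℝ)•αj) hαj h2ne (fun α => ((k α * ⟪α, sRefl αj ξ⟫ : ℝ) : ℂ)
          * (f (sRefl αj x) - f (sRefl αj (sRefl α x)))
          / (1 - Complex.exp (-(⟪α, x⟫ : ℝ) : ℂ))),
        sum_reindex ((Rp.erase αj).erase ((2:ℝ)•αj)) αj ha hsimple
          (fun α => ((k α * ⟪α, ξ⟫ : ℝ) : ℂ)
          * (f (sRefl αj x) - f (sRefl α (sRefl αj x)))
          / (1 - Complex.exp (-(⟪α, sRefl αj x⟫ : ℝ) : ℂ)))]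
    rw [Finset.sum_congr rfl hterm]
    by_cases h2 : (2:ℝ)•αj ∈ Rp
    · rw [if_pos h2, if_pos h2, if_pos (h2iff.mp h2)]
      rw [sRefl_two_smul αj (sRefl αj x) ha, sRefl_two_smul αj x ha]
      simp only [real_inner_smul_left]
      rw [hsxx, hinx, hinξ]
      have k1 := key_frac ⟪αj,x⟫ ht
        (((k αj : ℝ) : ℂ) * ((⟪αj,ξ⟫ : ℝ) : ℂ) * (f (sRefl αj x) - f x))
      have k2 := key_frac (2 * ⟪αj,x⟫) (mul_ne_zero two_ne_zero ht)
        (((k ((2:ℝ)•αj) : ℝ) : ℂ) * 2 * ((⟪αj,ξ⟫ : ℝ) : ℂ) * (f (sRefl αj x) - f x))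
      push_cast [mul_neg, neg_neg] at k1 k2 ⊢
      linear_combination k1 + k2
    · rw [if_neg h2, if_neg h2, if_neg (fun hh => h2 (h2iff.mpr hh))]
      rw [hsxx, hinx, hinξ]
      have k1 := key_frac ⟪αj,x⟫ ht
        (((k αj : ℝ) : ℂ) * ((⟪αj,ξ⟫ : ℝ) : ℂ) * (f (sRefl αj x) - f x))
      push_cast [mul_neg, neg_neg] at k1 ⊢
      linear_combination k1
  have hPc : ((⟪rho Rp k, ξ⟫ : ℝ) : ℂ) - ((⟪rho Rp k, sRefl αj ξ⟫ : ℝ) : ℂ)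
      = (((k αj + 2 * (if (2:ℝ)•αj ∈ R then k ((2:ℝ)•αj) else 0)) * ⟪αj, ξ⟫ : ℝ) : ℂ) := by
    exact_mod_cast congrArg (fun r : ℝ => (r : ℂ)) hP
  simp only [cherednik]
  rw [hD, real_inner_comm αj ξ]
  push_cast [mul_neg, neg_neg] at hS hPc ⊢
  linear_combination hS - (f (sRefl αj x)) * hPc
end

section
/- Let n ≥ 1 and λ, μ ∈ ℤ^n with μ ⊲ λ. Then: (i) for 1 ≤ i ≤ n−1, if λ_{i+1} < λ_i then s_i μ ≠ λ; (ii) if λ_n ≥ 0 then s_n μ ≠ λ; (iii) if λ_1 ≤ 0 then s_0 μ ≠ λ. -/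
open scoped BigOperators
open Finset

/-- The dominance order on `ℤⁿ` (coming from the positive system `BC_n^+`):
`μ ≤ λ` iff `∑_{i≤p} μ_i ≤ ∑_{i≤p} λ_i` for all `p`. -/
def domLe {n : ℕ} (μ lam : Fin n → ℤ) : Prop :=
  ∀ p : Fin n, ∑ l ∈ Finset.Iic p, μ l ≤ ∑ l ∈ Finset.Iic p, lam l

/-- `lamp` is the decreasing rearrangement of the absolute values of `lam`, i.e. the
unique representative of the hyperoctahedral orbit of `lam` with
`lamp₁ ≥ … ≥ lamp_n ≥ 0`. -/
def IsDecAbsRearrangement {n : ℕ} (lam lamp : Fin n → ℤ) : Prop :=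
  (∀ i j : Fin n, i ≤ j → lamp j ≤ lamp i) ∧ (∀ i, 0 ≤ lamp i) ∧
    ∃ σ : Equiv.Perm (Fin n), ∀ i, lamp i = |lam (σ i)|

/-- The extended order `μ ⊴ λ` on `ℤⁿ`. -/
def triLe {n : ℕ} (μ mup lam lamp : Fin n → ℤ) : Prop :=
  (mup ≠ lamp ∧ domLe mup lamp) ∨ (mup = lamp ∧ domLe lam μ)

/-- Uniqueness of antitone rearrangements. -/
lemma antitone_rearr_unique {n : ℕ} {f g : Fin n → ℤ}
    (hf : ∀ i j : Fin n, i ≤ j → f j ≤ f i)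
    (hg : ∀ i j : Fin n, i ≤ j → g j ≤ g i)
    (σ : Equiv.Perm (Fin n)) (h : ∀ i, f i = g (σ i)) : f = g := by
  have hanti : IsAntisymm ℤ (fun a b : ℤ => b ≤ a) := ⟨fun a b h1 h2 => le_antisymm h2 h1⟩
  apply List.ofFn_injective (n := n)
  refine (fun hp h1 h2 => List.Perm.eq_of_pairwise' (r := fun a b : ℤ => b ≤ a) h1 h2 hp) ?_ ?_ ?_
  · have : f = g ∘ σ := funext h
    rw [this]
    exact σ.ofFn_comp_perm g
  · rw [List.pairwise_ofFn]
    exact fun i j hij => hf i j hij.le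
  · rw [List.pairwise_ofFn]
    exact fun i j hij => hg i j hij.le

/-- If `|μ|` is a permutation of `|lam|`, then their decreasing rearrangements coincide. -/
lemma mup_eq_lamp {n : ℕ} {μ lam mup lamp : Fin n → ℤ}
    (hlamp : IsDecAbsRearrangement lam lamp) (hmup : IsDecAbsRearrangement μ mup)
    (π : Equiv.Perm (Fin n)) (habs : ∀ l, |μ l| = |lam (π l)|) : mup = lamp := by
  obtain ⟨hl1, _, σ', hσ'⟩ := hlamp
  obtain ⟨hm1, _, σ, hσ⟩ := hmup
  refine antitone_rearr_unique hm1 hl1 (σ.trans (π.trans σ'.symm)) (fun i => ?_)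
  have : lamp (σ'.symm (π (σ i))) = |lam (π (σ i))| := by
    rw [hσ' (σ'.symm (π (σ i))), Equiv.apply_symm_apply]
  simp only [Equiv.trans_apply]
  rw [this, hσ i, habs (σ i)]

/-- If `μ ⊲ λ` in `ℤⁿ`, then: (i) if `λ_{i+1} < λ_i` then `s_i μ ≠ λ`;
(ii) if `λ_n ≥ 0` then `s_n μ ≠ λ`; (iii) if `λ_1 ≤ 0` then `s_0 μ ≠ λ`. -/
theorem sahi_order_weyl_action
    {n : ℕ} (hn : 0 < n) (lam μ lamp mup : Fin n → ℤ)
    (hlamp : IsDecAbsRearrangement lam lamp)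
    (hmup : IsDecAbsRearrangement μ mup)
    (hle : triLe μ mup lam lamp) (hne : μ ≠ lam) :
    (∀ i j : Fin n, (i : ℕ) + 1 = (j : ℕ) → lam j < lam i →
      (fun l => if l = i then μ j else if l = j then μ i else μ l) ≠ lam) ∧
    (0 ≤ lam ⟨n - 1, Nat.sub_lt hn one_pos⟩ →
      (fun l => if l = (⟨n - 1, Nat.sub_lt hn one_pos⟩ : Fin n) then -μ l else μ l) ≠ lam) ∧
    (lam ⟨0, hn⟩ ≤ 0 →
      (fun l => if l = (⟨0, hn⟩ : Fin n) then 1 - μ l else μ l) ≠ lam) := by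
  refine ⟨?_, ?_, ?_⟩
  · -- case (i)
    intro i j hij hlt heq
    have hlam : ∀ l, lam l = if l = i then μ j else if l = j then μ i else μ l :=
      fun l => (congrFun heq l).symm
    have hij' : i ≠ j := by
      intro h; rw [h] at hij; omega
    have hji' : j ≠ i := hij'.symm
    have hlami : lam i = μ j := by rw [hlam i, if_pos rfl]
    have hlamj : lam j = μ i := by rw [hlam j, if_neg hji', if_pos rfl]
    have hother : ∀ l, l ≠ i → l ≠ j → lam l = μ l := by
      intro l h1 h2; rw [hlam l, if_neg h1, if_neg h2]
    -- |μ| is a permutation (swap i j) of |lam|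
    have habs : ∀ l, |μ l| = |lam (Equiv.swap i j l)| := by
      intro l
      rcases eq_or_ne l i with rfl | h1
      · rw [Equiv.swap_apply_left, hlamj]
      rcases eq_or_ne l j with rfl | h2
      · rw [Equiv.swap_apply_right, hlami]
      · rw [Equiv.swap_apply_of_ne_of_ne h1 h2, hother l h1 h2]
    have hmeq : mup = lamp := mup_eq_lamp hlamp hmup (Equiv.swap i j) habs
    rcases hle with ⟨hne', _⟩ | ⟨_, hdom⟩
    · exact hne' hmeq
    have hsum : ∑ l ∈ Finset.Iic i, (μ l - lam l) = μ i - lam i := by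
      apply Finset.sum_eq_single i
      · intro b hb hbi
        have hbj : b ≠ j := by
          intro h; subst h
          have := Finset.mem_Iic.mp hb
          rw [Fin.le_def] at this; omega
        rw [hother b hbi hbj]; ring
      · intro h; exact absurd (Finset.mem_Iic.mpr le_rfl) h
    have h2 := hdom i
    rw [Finset.sum_sub_distrib] at hsum
    have : μ i = lam j := hlamj.symm
    omega
  · -- case (ii)
    intro hpos heq
    set e : Fin n := ⟨n - 1, Nat.sub_lt hn one_pos⟩ with he
    have hlam : ∀ l, lam l = if l = e then -μ l else μ l := fun l => (congrFun heq l).symm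
    have hlame : lam e = -μ e := by rw [hlam e, if_pos rfl]
    have hother : ∀ l, l ≠ e → lam l = μ l := by
      intro l h1; rw [hlam l, if_neg h1]
    have hepos : 0 < lam e := by
      rcases lt_or_eq_of_le hpos with h | h
      · exact h
      · exfalso; apply hne; funext l
        rcases eq_or_ne l e with rfl | h1
        · omega
        · exact (hother l h1).symm
    have habs : ∀ l, |μ l| = |lam ((1 : Equiv.Perm (Fin n)) l)| := by
      intro l
      rcases eq_or_ne l e with rfl | h1
      · simp only [Equiv.Perm.one_apply]; rw [hlame, abs_neg]
      · simp only [Equiv.Perm.one_apply]; rw [hother l h1]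
    have hmeq : mup = lamp := mup_eq_lamp hlamp hmup 1 habs
    rcases hle with ⟨hne', _⟩ | ⟨_, hdom⟩
    · exact hne' hmeq
    have hsum : ∑ l ∈ Finset.Iic e, (μ l - lam l) = μ e - lam e := by
      apply Finset.sum_eq_single e
      · intro b _ hbe; rw [hother b hbe]; ring
      · intro h; exact absurd (Finset.mem_Iic.mpr le_rfl) h
    have h2 := hdom e
    rw [Finset.sum_sub_distrib] at hsum
    omega
  · -- case (iii)
    intro hle0 heq
    set z : Fin n := ⟨0, hn⟩ with hz
    have hlam : ∀ l, lam l = if l = z then 1 - μ l else μ l := fun l => (congrFun heq l).symm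
    have hlamz : lam z = 1 - μ z := by rw [hlam z, if_pos rfl]
    have hother : ∀ l, l ≠ z → lam l = μ l := by
      intro l h1; rw [hlam l, if_neg h1]
    -- last index, whose Iic is everything
    set e : Fin n := ⟨n - 1, Nat.sub_lt hn one_pos⟩ with he
    have hIic : Finset.Iic e = Finset.univ := by
      apply Finset.eq_univ_of_forall
      intro b
      rw [Finset.mem_Iic, Fin.le_def]
      have := b.isLt
      simp only [he]
      omega
    obtain ⟨_, hl2, σ', hσ'⟩ := hlamp
    obtain ⟨_, hm2, σ, hσ⟩ := hmup
    have hsmup : ∑ l, mup l = ∑ l, |μ l| := by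
      calc ∑ l, mup l = ∑ l, |μ (σ l)| := by simp_rw [hσ]
        _ = ∑ l, |μ l| := Equiv.sum_comp σ (fun l => |μ l|)
    have hslamp : ∑ l, lamp l = ∑ l, |lam l| := by
      calc ∑ l, lamp l = ∑ l, |lam (σ' l)| := by simp_rw [hσ']
        _ = ∑ l, |lam l| := Equiv.sum_comp σ' (fun l => |lam l|)
    have hdiff : ∑ l, (|μ l| - |lam l|) = |μ z| - |lam z| := by
      apply Finset.sum_eq_single z
      · intro b _ hbz; rw [hother b hbz]; ring
      · intro h; exact absurd (Finset.mem_univ z) h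
    have hmuz : μ z = 1 - lam z := by omega
    have habs1 : |μ z| = 1 - lam z := by
      rw [hmuz, abs_of_pos]; omega
    have habs2 : |lam z| = -lam z := abs_of_nonpos hle0
    have hdiff' : ∑ l, |μ l| = ∑ l, |lam l| + 1 := by
      rw [Finset.sum_sub_distrib] at hdiff
      omega
    rcases hle with ⟨_, hdom⟩ | ⟨hmeq, _⟩
    · have h2 := hdom e
      rw [hIic] at h2
      omega
    · have : ∑ l, mup l = ∑ l, lamp l := by rw [hmeq]
      omega
end

section
/- Let 𝔰 = span_ℝ R, 𝔠 = 𝔰^⊥, with orthogonal projections π_𝔰, π_𝔠, and let λ ∈ 𝔞_ℂ. Suppose g : 𝔞 → ℂ is continuously differentiable with g(0) = 1, g(x) = g(π_𝔰 x) for all x ∈ 𝔞, and T_ξ(R,k) g(x) = ⟨π_𝔰 λ, ξ⟩ g(x) for all ξ ∈ 𝔞 and all regular x. Then the function f(x) := e^{⟨π_𝔠 λ, π_𝔠 x⟩} g(x) satisfies f(0) = 1 and T_ξ(R,k) f(x) = ⟨λ, ξ⟩ f(x) for all ξ ∈ 𝔞 and all regular x ∈ 𝔞. -/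
open scoped BigOperators RealInnerProductSpace
open Finset

variable {𝔞 : Type*} [NormedAddCommGroup 𝔞] [InnerProductSpace ℝ 𝔞] [FiniteDimensional ℝ 𝔞]

/-- The rational Dunkl operator `T_ξ(R,k)` applied pointwise. -/
noncomputable def dunkl (Rp : Finset 𝔞) (k : 𝔞 → ℝ) (ξ : 𝔞) (f : 𝔞 → ℂ) (x : 𝔞) : ℂ :=
  fderiv ℝ f x ξ
    + ∑ α ∈ Rp, ((k α * ⟪α, ξ⟫ : ℝ) : ℂ) * (f x - f (sRefl α x)) / ((⟪α, x⟫ : ℝ) : ℂ)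

set_option linter.unusedSectionVars false in
lemma my_perp_mem (R : Finset 𝔞) (a : 𝔞) :
    projPerp R a ∈ (Submodule.span ℝ (R : Set 𝔞))ᗮ := by
  exact (Submodule.orthogonalProjectionOnto _ a).2

set_option linter.unusedSectionVars false in
lemma my_inner_perp (R : Finset 𝔞) (a y : 𝔞) :
    ⟪projPerp R a, y⟫ = ⟪projPerp R a, projPerp R y⟫ := by
  conv_lhs => rw [← Submodule.starProjection_add_starProjection_orthogonal
    (K := Submodule.span ℝ (R : Set 𝔞)) y, Submodule.starProjection_apply, Submodule.starProjection_apply]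
  rw [inner_add_right]
  have h0 : ⟪projPerp R a, (Submodule.orthogonalProjectionOnto (Submodule.span ℝ (R : Set 𝔞)) y : 𝔞)⟫ = 0 := by
    rw [real_inner_comm]
    exact (my_perp_mem R a) _ (Submodule.orthogonalProjectionOnto _ y).2
  rw [h0]; simp [projPerp]

set_option linter.unusedSectionVars false in
lemma my_split (R : Finset 𝔞) (a y : 𝔞) :
    ⟪a, y⟫ = ⟪projSpan R a, y⟫ + ⟪projPerp R a, y⟫ := by
  conv_lhs => rw [← Submodule.starProjection_add_starProjection_orthogonal
    (K := Submodule.span ℝ (R : Set 𝔞)) a, Submodule.starProjection_apply, Submodule.starProjection_apply]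
  rw [inner_add_left]; rfl

set_option linter.unusedSectionVars false in
lemma my_projPerp_sRefl (R : Finset 𝔞) {α : 𝔞} (hα : α ∈ R) (x : 𝔞) :
    projPerp R (sRefl α x) = projPerp R x := by
  have hmem : α ∈ Submodule.span ℝ (R : Set 𝔞) := Submodule.subset_span hα
  have h0 : Submodule.orthogonalProjectionOnto (Submodule.span ℝ (R : Set 𝔞))ᗮ α = 0 :=
    Submodule.orthogonalProjectionOnto_apply_of_mem_orthogonal
      ((Submodule.span ℝ (R : Set 𝔞)).le_orthogonal_orthogonal hmem)
  simp [projPerp, sRefl, map_sub, map_smul, h0]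

/-- If `g` is a `π_𝔰`-factorizing eigenfunction of the rational Dunkl
operators with spectral parameter `π_𝔰 λ`, then `f(x) = e^{⟨π_𝔠 λ, π_𝔠 x⟩} g(x)` is an
eigenfunction with spectral parameter `λ`, normalized by `f(0) = 1`. -/
theorem dunkl_eigenfunction_extension
    (R : Finset 𝔞) (hR : IsIntegralRootSystem R)
    (Rp : Finset 𝔞) (hRp : IsPositiveSystem R Rp)
    (k : 𝔞 → ℝ) (hk : ∀ α ∈ R, ∀ β ∈ R, k (sRefl α β) = k β)
    (lamRe lamIm : 𝔞) (g : 𝔞 → ℂ) (hg : ContDiff ℝ 1 g) (hg0 : g 0 = 1)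
    (hgproj : ∀ x : 𝔞, g x = g (projSpan R x))
    (hgeig : ∀ ξ x : 𝔞, IsRegularPt R x →
      dunkl Rp k ξ g x = pairC (projSpan R lamRe) (projSpan R lamIm) ξ * g x) :
    (Complex.exp (pairC (projPerp R lamRe) (projPerp R lamIm) (projPerp R (0 : 𝔞))) * g 0 = 1) ∧
    ∀ ξ x : 𝔞, IsRegularPt R x →
      dunkl Rp k ξ
          (fun y => Complex.exp (pairC (projPerp R lamRe) (projPerp R lamIm) (projPerp R y)) * g y) x
        = pairC lamRe lamIm ξ
          * (Complex.exp (pairC (projPerp R lamRe) (projPerp R lamIm) (projPerp R x)) * g x) := by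
  classical
  set Φ : 𝔞 →L[ℝ] ℂ :=
    Complex.ofRealCLM.comp ((innerSL ℝ) (projPerp R lamRe)) +
      Complex.I • Complex.ofRealCLM.comp ((innerSL ℝ) (projPerp R lamIm)) with hΦdef
  have hΦ : ∀ y : 𝔞, Φ y = (⟪projPerp R lamRe, y⟫ : ℂ) + Complex.I * (⟪projPerp R lamIm, y⟫ : ℂ) := by
    intro y
    simp [hΦdef]
  have hpair : ∀ y : 𝔞,
      pairC (projPerp R lamRe) (projPerp R lamIm) (projPerp R y) = Φ y := by
    intro y
    rw [hΦ, pairC, ← my_inner_perp, ← my_inner_perp]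
  have hΦs : ∀ (α : 𝔞), α ∈ R → ∀ x : 𝔞, Φ (sRefl α x) = Φ x := by
    intro α hα x
    rw [← hpair, ← hpair, my_projPerp_sRefl R hα]
  have hfun : (fun y => Complex.exp
        (pairC (projPerp R lamRe) (projPerp R lamIm) (projPerp R y)) * g y)
      = fun y => Complex.exp (Φ y) * g y := by
    funext y; rw [hpair]
  constructor
  · rw [hpair 0, hg0, mul_one]
    have : Φ 0 = 0 := map_zero Φ
    rw [this, Complex.exp_zero]
  · intro ξ x hx
    rw [hfun, hpair x]
    obtain ⟨v, hv, hmem⟩ := hRp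
    have hRpR : ∀ α ∈ Rp, α ∈ R := fun α hα => ((hmem α).1 hα).1
    -- derivative computation
    have hgd : HasFDerivAt g (fderiv ℝ g x) x :=
      ((hg.differentiable one_ne_zero) x).hasFDerivAt
    have hE : HasFDerivAt (fun y : 𝔞 => Complex.exp (Φ y)) (Complex.exp (Φ x) • Φ) x :=
      (Φ.hasFDerivAt (x := x)).cexp
    have hF : HasFDerivAt (fun y : 𝔞 => Complex.exp (Φ y) * g y)
        (Complex.exp (Φ x) • fderiv ℝ g x + g x • (Complex.exp (Φ x) • Φ)) x := hE.mul hgd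
    have hfd : fderiv ℝ (fun y : 𝔞 => Complex.exp (Φ y) * g y) x ξ
        = Complex.exp (Φ x) * (fderiv ℝ g x ξ) + g x * (Complex.exp (Φ x) * Φ ξ) := by
      rw [hF.fderiv]
      simp [smul_eq_mul, mul_comm]
    have hsum : ∑ α ∈ Rp, ((k α * ⟪α, ξ⟫ : ℝ) : ℂ) *
          (Complex.exp (Φ x) * g x - Complex.exp (Φ (sRefl α x)) * g (sRefl α x)) /
          ((⟪α, x⟫ : ℝ) : ℂ)
        = Complex.exp (Φ x) * ∑ α ∈ Rp, ((k α * ⟪α, ξ⟫ : ℝ) : ℂ) *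
          (g x - g (sRefl α x)) / ((⟪α, x⟫ : ℝ) : ℂ) := by
      rw [Finset.mul_sum]
      refine Finset.sum_congr rfl fun α hα => ?_
      rw [hΦs α (hRpR α hα) x]
      ring
    have hgeq := hgeig ξ x hx
    rw [dunkl] at hgeq ⊢
    rw [hfd, hsum]
    have hS : ∑ α ∈ Rp, ((k α * ⟪α, ξ⟫ : ℝ) : ℂ) * (g x - g (sRefl α x)) / ((⟪α, x⟫ : ℝ) : ℂ)
        = pairC (projSpan R lamRe) (projSpan R lamIm) ξ * g x - fderiv ℝ g x ξ := by
      linear_combination hgeq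
    rw [hS]
    have hlam : pairC lamRe lamIm ξ
        = pairC (projSpan R lamRe) (projSpan R lamIm) ξ + Φ ξ := by
      rw [pairC, pairC, hΦ, my_split R lamRe ξ, my_split R lamIm ξ]
      push_cast
      ring
    rw [hlam]
    ring
end
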